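/- arXiv:1809.03295 — 3 statements merged into one kernel-verified Lean document; each statement's English description precedes it below -/
import Mathlib

section
/- An element α' ∈ H⊗H satisfies (αΔ⊗1)α' = (1⊗αΔ)α' − (12)(1⊗αΔ)α' if and only if α' = α·Δ(A) for some A ∈ H. In particular, every nonzero solution α' of this equation is of the form α·Δ(A), and conversely every element of the form α·Δ(A) is a solution. -/
open scoped TensorProduct
open Polynomial

noncomputable section

variable (k : Type) [Field k] [CharZero k]

/-- `H ⊗ H` where `H = k[s]`. -/
abbrev HH := Polynomial k ⊗[k] Polynomial k

/-- `H ⊗ H ⊗ H`. -/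
abbrev HHH := Polynomial k ⊗[k] (Polynomial k ⊗[k] Polynomial k)

/-- The comultiplication `Δ : H → H ⊗ H`, with `Δ(s) = s⊗1 + 1⊗s`. -/
def Hcomul : Polynomial k →ₐ[k] HH k :=
  aeval ((X : Polynomial k) ⊗ₜ[k] (1 : Polynomial k) +
    (1 : Polynomial k) ⊗ₜ[k] (X : Polynomial k))

/-- The swap `(12)` on `H ⊗ H`. -/
def sw2 : HH k ≃ₐ[k] HH k := Algebra.TensorProduct.comm k _ _

/-- Associator `(H⊗H)⊗H ≃ H⊗(H⊗H)`. -/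
def tAssoc : (HH k ⊗[k] Polynomial k) ≃ₐ[k] HHH k :=
  Algebra.TensorProduct.assoc k k k (Polynomial k) (Polynomial k) (Polynomial k)

/-- The swap of the first two tensor factors on `H ⊗ H ⊗ H`. -/
def sw12 : HHH k ≃ₐ[k] HHH k :=
  (tAssoc k).symm.trans
    ((Algebra.TensorProduct.congr (sw2 k) AlgEquiv.refl).trans (tAssoc k))

/-- `Δ ⊗ id : H⊗H → H⊗H⊗H`. -/
def DL : HH k →ₐ[k] HHH k :=
  (tAssoc k).toAlgHom.comp (Algebra.TensorProduct.map (Hcomul k) (AlgHom.id k _))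

/-- `id ⊗ Δ : H⊗H → H⊗H⊗H`. -/
def DR : HH k →ₐ[k] HHH k :=
  Algebra.TensorProduct.map (AlgHom.id k _) (Hcomul k)

/-- `β ↦ β ⊗ 1` into the first two factors of `H⊗H⊗H`. -/
def inc12 : HH k →ₐ[k] HHH k :=
  (tAssoc k).toAlgHom.comp Algebra.TensorProduct.includeLeft

/-- `β ↦ 1 ⊗ β` into the last two factors of `H⊗H⊗H`. -/
def inc23 : HH k →ₐ[k] HHH k := Algebra.TensorProduct.includeRight

/-- `(βΔ⊗1)γ := (β⊗1)·((Δ⊗id)(γ))`. -/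
def opL (β γ : HH k) : HHH k := inc12 k β * DL k γ

/-- `(1⊗βΔ)γ := (1⊗β)·((id⊗Δ)(γ))`. -/
def opR (β γ : HH k) : HHH k := inc23 k β * DR k γ

/-- The divided power `s^(n) = sⁿ/n!`. -/
def sp (n : ℕ) : Polynomial k := (n.factorial : k)⁻¹ • X ^ n

/-- `α = s⊗1 − 1⊗s`. -/
def alphaE : HH k :=
  (X : Polynomial k) ⊗ₜ[k] (1 : Polynomial k) -
    (1 : Polynomial k) ⊗ₜ[k] (X : Polynomial k)

/-- `β = λ s⊗1 − 1⊗s + κ 1⊗1`. -/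
def betaE (lam kap : k) : HH k :=
  lam • ((X : Polynomial k) ⊗ₜ[k] (1 : Polynomial k)) -
    (1 : Polynomial k) ⊗ₜ[k] (X : Polynomial k) +
    kap • ((1 : Polynomial k) ⊗ₜ[k] (1 : Polynomial k))

/-!
Send `s⊗1 ↦ x`, `1⊗s ↦ y` and `s⊗1⊗1, 1⊗s⊗1, 1⊗1⊗s ↦ x, y, z`: both maps are injective,
`α ↦ x - y`, `Δ(A) ↦ A(x + y)`, and the equation for `α' ↦ p(x, y)` becomes
`(x - y) p(x + y, z) = (y - z) p(x, y + z) - (x - z) p(y, x + z)`.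
Substituting `(x, y, z) ↦ (x - y, y, y)` kills the middle term and leaves
`(x - 2y) p(x, y) = -(x - 2y) p(y, x)`, so `p` is antisymmetric and, in characteristic zero,
`p(0, 0) = 0`. Substituting `z ↦ 0` and using antisymmetry gives
`(x + y) p(x, y) = (x - y) p(x + y, 0)`; writing `p(t, 0) = t a(t)` and cancelling `x + y`
yields `p = (x - y) a(x + y)`, i.e. `α' = α Δ(a)`. Conversely, for such `p` each of the three
terms carries the factor `a(x + y + z)` and the identity reduces to one between linear forms.
-/
theorem Matrix.comp_vec2 {α β : Type*} (f : α → β) (a b : α) :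
    (fun i => f (![a, b] i)) = ![f a, f b] := by
  funext i
  fin_cases i <;> rfl

section
open MvPolynomial
variable {R : Type*} [CommRing R]

theorem MvPolynomial.bind₁_vec2_X (p : MvPolynomial (Fin 2) R) : bind₁ ![X 0, X 1] p = p := by
  have : ![X 0, X 1] = (X : Fin 2 → MvPolynomial (Fin 2) R) := by
    funext i
    fin_cases i <;> rfl
  rw [this, bind₁_X_left, AlgHom.id_apply]

def IsAlphaSolution (p : MvPolynomial (Fin 2) R) : Prop :=
  (X 0 - X 1 : MvPolynomial (Fin 3) R) * bind₁ ![X 0 + X 1, X 2] p =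
    (X 1 - X 2) * bind₁ ![X 0, X 1 + X 2] p - (X 0 - X 2) * bind₁ ![X 1, X 0 + X 2] p

namespace IsAlphaSolution

variable [IsDomain R] {p : MvPolynomial (Fin 2) R}

theorem swap_eq_neg (h : IsAlphaSolution p) : bind₁ ![X 1, X 0] p = -p := by
  have key := congrArg (bind₁ ![(X 0 - X 1 : MvPolynomial (Fin 2) R), X 1, X 1]) h
  simp only [map_mul, map_sub, map_add, bind₁_X_right, bind₁_bind₁, Matrix.comp_vec2,
    Matrix.cons_val_zero, Matrix.cons_val_one, Matrix.cons_val, sub_add_cancel, bind₁_vec2_X,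
    sub_self, zero_mul, zero_sub] at key
  have hne : (X 0 - X 1 - X 1 : MvPolynomial (Fin 2) R) ≠ 0 := fun h0 => by
    simpa using congrArg (MvPolynomial.eval ![1, 0]) h0
  exact (mul_left_cancel₀ hne (by linear_combination -key)).symm

theorem eval_zero_eq_zero [CharZero R] (h : IsAlphaSolution p) :
    MvPolynomial.eval ![0, 0] p = 0 := by
  have key : MvPolynomial.eval ![0, 0] p = -MvPolynomial.eval ![0, 0] p := by
    simpa [aeval_bind₁, Matrix.comp_vec2] using
      congrArg (MvPolynomial.aeval ![(0 : R), 0]) h.swap_eq_neg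
  exact self_eq_neg.mp key

theorem add_mul_eq (h : IsAlphaSolution p) :
    (X 0 + X 1) * p = (X 0 - X 1) * bind₁ ![X 0 + X 1, 0] p := by
  have key := congrArg (bind₁ ![(X 0 : MvPolynomial (Fin 2) R), X 1, 0]) h
  simp only [map_mul, map_sub, map_add, bind₁_X_right, bind₁_bind₁, Matrix.comp_vec2,
    Matrix.cons_val_zero, Matrix.cons_val_one, Matrix.cons_val, sub_zero, add_zero, bind₁_vec2_X,
    h.swap_eq_neg] at key
  linear_combination -key

theorem exists_eq_mul_aeval [CharZero R] (h : IsAlphaSolution p) :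
    ∃ a : R[X], p = (X 0 - X 1) * Polynomial.aeval (X 0 + X 1) a := by
  set q : R[X] := MvPolynomial.aeval ![Polynomial.X, 0] p
  have hq :
      Polynomial.aeval (X 0 + X 1 : MvPolynomial (Fin 2) R) q = bind₁ ![X 0 + X 1, 0] p := by
    rw [← AlgHom.comp_apply, comp_aeval]
    simp [Matrix.comp_vec2]
  have hq0 : q.coeff 0 = 0 := by
    rw [coeff_zero_eq_eval_zero, ← Polynomial.coe_aeval_eq_eval, ← AlgHom.comp_apply, comp_aeval]
    simpa [Matrix.comp_vec2] using h.eval_zero_eq_zero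
  obtain ⟨a, ha⟩ := X_dvd_iff.mpr hq0
  have hne : (X 0 + X 1 : MvPolynomial (Fin 2) R) ≠ 0 := fun h0 => by
    simpa using congrArg (MvPolynomial.eval ![1, 0]) h0
  refine ⟨a, mul_left_cancel₀ hne ?_⟩
  rw [h.add_mul_eq, ← hq, ha, map_mul, Polynomial.aeval_X]
  ring

end IsAlphaSolution

theorem isAlphaSolution_mul_aeval (a : R[X]) :
    IsAlphaSolution ((X 0 - X 1) * Polynomial.aeval (X 0 + X 1 : MvPolynomial (Fin 2) R) a) := by
  have hsubst (f : Fin 2 → MvPolynomial (Fin 3) R) :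
      bind₁ f (Polynomial.aeval (X 0 + X 1) a) = Polynomial.aeval (f 0 + f 1) a := by
    rw [← Polynomial.aeval_algHom_apply, map_add, bind₁_X_right, bind₁_X_right]
  simp only [IsAlphaSolution, map_mul, map_sub, bind₁_X_right, hsubst, Matrix.cons_val_zero,
    Matrix.cons_val_one, Matrix.cons_val_fin_one, add_assoc,
    add_left_comm (X 1 : MvPolynomial (Fin 3) R)]
  ring

theorem isAlphaSolution_iff [IsDomain R] [CharZero R] {p : MvPolynomial (Fin 2) R} :
    IsAlphaSolution p ↔ ∃ a : R[X], p = (X 0 - X 1) * Polynomial.aeval (X 0 + X 1) a :=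
  ⟨IsAlphaSolution.exists_eq_mul_aeval, fun ⟨a, ha⟩ => ha ▸ isAlphaSolution_mul_aeval a⟩

end

section
open MvPolynomial
variable (k : Type) [Field k]

def HH.toMvPolynomial : HH k →ₐ[k] MvPolynomial (Fin 2) k :=
  Algebra.TensorProduct.productMap (Polynomial.aeval (X 0)) (Polynomial.aeval (X 1))

def HHH.toMvPolynomial : HHH k →ₐ[k] MvPolynomial (Fin 3) k :=
  Algebra.TensorProduct.productMap (Polynomial.aeval (X 0))
    (Algebra.TensorProduct.productMap (Polynomial.aeval (X 1)) (Polynomial.aeval (X 2)))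

theorem HH.toMvPolynomial_injective : Function.Injective (HH.toMvPolynomial k) := by
  let G : MvPolynomial (Fin 2) k →ₐ[k] HH k := aeval ![Polynomial.X ⊗ₜ 1, 1 ⊗ₜ Polynomial.X]
  have hGF : G.comp (HH.toMvPolynomial k) = AlgHom.id k _ := by
    ext <;> simp [G, HH.toMvPolynomial]
  exact Function.LeftInverse.injective (g := G) (DFunLike.congr_fun hGF)

theorem HHH.toMvPolynomial_injective : Function.Injective (HHH.toMvPolynomial k) := by
  let G : MvPolynomial (Fin 3) k →ₐ[k] HHH k := aeval (![Polynomial.X ⊗ₜ (1 ⊗ₜ 1),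
    1 ⊗ₜ (Polynomial.X ⊗ₜ 1), 1 ⊗ₜ (1 ⊗ₜ Polynomial.X)] : Fin 3 → HHH k)
  have hGF : G.comp (HHH.toMvPolynomial k) = AlgHom.id k _ := by
    ext <;> simp [G, HHH.toMvPolynomial, Algebra.TensorProduct.one_def]
  exact Function.LeftInverse.injective (g := G) (DFunLike.congr_fun hGF)

theorem HH.toMvPolynomial_Hcomul (A : Polynomial k) :
    HH.toMvPolynomial k (Hcomul k A) = Polynomial.aeval (X 0 + X 1) A := by
  rw [← AlgHom.comp_apply]
  congr 1
  apply Polynomial.algHom_ext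
  simp [HH.toMvPolynomial, Hcomul]

theorem HH.toMvPolynomial_alphaE : HH.toMvPolynomial k (alphaE k) = X 0 - X 1 := by
  simp [HH.toMvPolynomial, alphaE]

theorem HHH.toMvPolynomial_inc12 (β : HH k) :
    HHH.toMvPolynomial k (inc12 k β) = bind₁ ![X 0, X 1] (HH.toMvPolynomial k β) := by
  rw [← AlgHom.comp_apply, ← AlgHom.comp_apply]
  congr 1
  ext <;> simp [HHH.toMvPolynomial, HH.toMvPolynomial, inc12, tAssoc]

theorem HHH.toMvPolynomial_inc23 (β : HH k) :
    HHH.toMvPolynomial k (inc23 k β) = bind₁ ![X 1, X 2] (HH.toMvPolynomial k β) := by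
  rw [← AlgHom.comp_apply, ← AlgHom.comp_apply]
  congr 1
  ext <;> simp [HHH.toMvPolynomial, HH.toMvPolynomial, inc23]

theorem HHH.toMvPolynomial_DL (γ : HH k) :
    HHH.toMvPolynomial k (DL k γ) = bind₁ ![X 0 + X 1, X 2] (HH.toMvPolynomial k γ) := by
  rw [← AlgHom.comp_apply, ← AlgHom.comp_apply]
  congr 1
  ext <;> simp [HHH.toMvPolynomial, HH.toMvPolynomial, DL, Hcomul, tAssoc,
    Algebra.TensorProduct.one_def, TensorProduct.add_tmul]

theorem HHH.toMvPolynomial_DR (γ : HH k) :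
    HHH.toMvPolynomial k (DR k γ) = bind₁ ![X 0, X 1 + X 2] (HH.toMvPolynomial k γ) := by
  rw [← AlgHom.comp_apply, ← AlgHom.comp_apply]
  congr 1
  ext <;> simp [HHH.toMvPolynomial, HH.toMvPolynomial, DR, Hcomul, Algebra.TensorProduct.one_def]

theorem HHH.toMvPolynomial_sw12 (x : HHH k) :
    HHH.toMvPolynomial k (sw12 k x) = bind₁ ![X 1, X 0, X 2] (HHH.toMvPolynomial k x) := by
  rw [← AlgHom.comp_apply, ← AlgEquiv.coe_toAlgHom, ← AlgHom.comp_apply]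
  congr 1
  ext <;> simp [HHH.toMvPolynomial, sw12, sw2, tAssoc, Algebra.TensorProduct.one_def]

theorem opL_alphaE_eq_iff_isAlphaSolution (α' : HH k) :
    opL k (alphaE k) α' = opR k (alphaE k) α' - sw12 k (opR k (alphaE k) α') ↔
      IsAlphaSolution (HH.toMvPolynomial k α') := by
  rw [← (HHH.toMvPolynomial_injective k).eq_iff, map_sub, opL, opR, HHH.toMvPolynomial_sw12,
    map_mul, map_mul, HHH.toMvPolynomial_inc12, HHH.toMvPolynomial_inc23, HHH.toMvPolynomial_DL,
    HHH.toMvPolynomial_DR, HH.toMvPolynomial_alphaE, IsAlphaSolution]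
  simp [bind₁_bind₁, Matrix.comp_vec2]

end

/-- **Lemma 2.6:** an element `α' ∈ H⊗H` satisfies
`(αΔ⊗1)α' = (1⊗αΔ)α' − (12)(1⊗αΔ)α'` if and only if `α' = α·Δ(A)` for some `A ∈ H`. -/
theorem alpha'_solution_abelian
    (k : Type) [Field k] [CharZero k] (α' : HH k) :
    (opL k (alphaE k) α' =
      opR k (alphaE k) α' - sw12 k (opR k (alphaE k) α')) ↔
    ∃ A : Polynomial k, α' = alphaE k * Hcomul k A := by
  rw [opL_alphaE_eq_iff_isAlphaSolution, isAlphaSolution_iff]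
  refine exists_congr fun A => ?_
  rw [← (HH.toMvPolynomial_injective k).eq_iff, map_mul, HH.toMvPolynomial_alphaE,
    HH.toMvPolynomial_Hcomul]
end
end

section
/- Structure of η and α' in m-type Schrödinger–Virasoro Lie conformal algebras: Let λ1, κ1, λ2, κ2 ∈ k and set β1 := λ1 s⊗1 − 1⊗s + κ1⊗1 and β2 := λ2 s⊗1 − 1⊗s + κ2⊗1. Suppose η ∈ H⊗H is of the form η = Σ_i b_i s^(i)⊗1 (b_i ∈ k) and satisfies (β1Δ⊗1)η = (1⊗ηΔ)β2 − (12)(1⊗β2Δ)η, and suppose α' ∈ H⊗H satisfies (β1Δ⊗1)α' = (1⊗α'Δ)β2 − (12)(1⊗β1Δ)α'. Then: (a) η = a⊗1 for some a ∈ k with aλ1 = aκ1 = 0; (b) (2κ1 − κ2)·α' = 0 in H⊗H; (c) if in addition a ≠ 0, α' ≠ 0, and −(α'Δ⊗1)((12)η) = (1⊗α'Δ)η − (12)(1⊗α'Δ)η, then α' = Σ_{j≥1} w_j (1⊗s^(j) − s^(j)⊗1) for some scalars w_j ∈ k (finitely many nonzero). -/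
/-!
Evaluate the tensor factors of `H ⊗ H ⊗ H` at elements `u, v, w` of a commutative `k`-algebra:
`(βΔ⊗1)γ` becomes `β(u, v) γ(u + v, w)`, `(1⊗βΔ)γ` becomes `β(v, w) γ(u, v + w)`, and `(12)`
exchanges `u` and `v`. For `η = p ⊗ 1` the first equation then reads
`(λ₁u − v + κ₁) p(u + v) = −v p(v)`, which at `(0, s)`, `(s, 0)` and `(s − 1, 1)` gives
`κ₁p = 0`, `λ₁p = 0` and `p = p(1)`. The equation for `α'` at `(0, s⊗1, 1⊗s)` is
`(2κ₁ − κ₂) α' = 0`, because evaluation at `(s⊗1, 1⊗s)` is the identity of `H ⊗ H`. When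
`η = a ≠ 0`, the last equation is the cocycle identity `α'(u, w) = α'(u, v) + α'(v, w)`, so
`α' = 1 ⊗ q − q ⊗ 1` with `q(t) = α'(0, t)`, and in the divided-power expansion of `q` the constant
term cancels.
-/

open scoped TensorProduct
open Polynomial

variable (k : Type) [Field k] {A B : Type} [CommRing A] [Algebra k A] [CommRing B] [Algebra k B]

noncomputable def evalHH (u v : A) : HH k →ₐ[k] A :=
  Algebra.TensorProduct.productMap (aeval u) (aeval v)

noncomputable def evalHHH (u v w : A) : HHH k →ₐ[k] A :=
  Algebra.TensorProduct.productMap (aeval u) (evalHH k v w)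

variable {k}

@[simp]
lemma evalHH_tmul (u v : A) (p q : Polynomial k) :
    evalHH k u v (p ⊗ₜ q) = aeval u p * aeval v q :=
  Algebra.TensorProduct.productMap_apply_tmul _ _ _ _

@[simp]
lemma evalHHH_tmul (u v w : A) (p : Polynomial k) (x : HH k) :
    evalHHH k u v w (p ⊗ₜ x) = aeval u p * evalHH k v w x :=
  Algebra.TensorProduct.productMap_apply_tmul _ _ _ _

lemma evalHH_X_tmul_one_one_tmul_X (x : HH k) :
    evalHH k (X ⊗ₜ[k] 1 : HH k) (1 ⊗ₜ[k] X) x = x := by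
  suffices h : evalHH k (X ⊗ₜ[k] 1 : HH k) (1 ⊗ₜ[k] X) = AlgHom.id k (HH k) from
    DFunLike.congr_fun h x
  ext <;> simp

lemma evalHH_algHom_apply (φ : A →ₐ[k] B) (u v : A) (x : HH k) :
    evalHH k (φ u) (φ v) x = φ (evalHH k u v x) := by
  suffices h : evalHH k (φ u) (φ v) = φ.comp (evalHH k u v) from DFunLike.congr_fun h x
  ext <;> simp [Polynomial.aeval_algHom_apply]

lemma evalHH_betaE (u v : A) (lam kap : k) :
    evalHH k u v (betaE k lam kap) = algebraMap k A lam * u - v + algebraMap k A kap := by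
  simp [betaE, Algebra.smul_def]

lemma evalHH_sw2 (u v : A) (x : HH k) : evalHH k u v (sw2 k x) = evalHH k v u x := by
  suffices h : (evalHH k u v).comp (sw2 k).toAlgHom = evalHH k v u from
    DFunLike.congr_fun h x
  ext <;> simp [sw2]

lemma evalHHH_sw12 (u v w : A) (t : HHH k) :
    evalHHH k u v w (sw12 k t) = evalHHH k v u w t := by
  suffices h : (evalHHH k u v w).comp (sw12 k).toAlgHom = evalHHH k v u w from
    DFunLike.congr_fun h t
  ext <;> simp [sw12, sw2, tAssoc, Algebra.TensorProduct.one_def]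

lemma evalHHH_opL (u v w : A) (β γ : HH k) :
    evalHHH k u v w (opL k β γ) = evalHH k u v β * evalHH k (u + v) w γ := by
  have hβ : (evalHHH k u v w).comp (inc12 k) = evalHH k u v := by
    ext <;> simp [inc12, tAssoc]
  have hγ : (evalHHH k u v w).comp (DL k) = evalHH k (u + v) w := by
    ext <;> simp [DL, tAssoc, Hcomul, TensorProduct.add_tmul, Algebra.TensorProduct.one_def]
  rw [opL, map_mul, ← AlgHom.comp_apply, hβ, ← AlgHom.comp_apply, hγ]

lemma evalHHH_opR (u v w : A) (β γ : HH k) :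
    evalHHH k u v w (opR k β γ) = evalHH k v w β * evalHH k u (v + w) γ := by
  have hβ : (evalHHH k u v w).comp (inc23 k) = evalHH k v w := by
    ext <;> simp [inc23]
  have hγ : (evalHHH k u v w).comp (DR k) = evalHH k u (v + w) := by
    ext <;> simp [DR, Hcomul]
  rw [opR, map_mul, ← AlgHom.comp_apply, hβ, ← AlgHom.comp_apply, hγ]

lemma eta_equation_eval {lam1 kap1 lam2 kap2 : k} {p : Polynomial k}
    (h : opL k (betaE k lam1 kap1) (p ⊗ₜ 1) =
      opR k (p ⊗ₜ 1) (betaE k lam2 kap2) - sw12 k (opR k (betaE k lam2 kap2) (p ⊗ₜ 1)))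
    (u v : A) :
    (algebraMap k A lam1 * u - v + algebraMap k A kap1) * aeval (u + v) p = -(v * aeval v p) := by
  have := congrArg (evalHHH k u v 0) h
  simp only [map_sub, evalHHH_opL, evalHHH_opR, evalHHH_sw12, evalHH_betaE, evalHH_tmul,
    map_one, mul_one, add_zero] at this
  linear_combination this

lemma exists_eq_C_of_eta_equation {lam1 kap1 lam2 kap2 : k} {p : Polynomial k}
    (h : opL k (betaE k lam1 kap1) (p ⊗ₜ 1) =
      opR k (p ⊗ₜ 1) (betaE k lam2 kap2) - sw12 k (opR k (betaE k lam2 kap2) (p ⊗ₜ 1))) :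
    ∃ a : k, p = C a ∧ a * lam1 = 0 ∧ a * kap1 = 0 := by
  have hkap : C kap1 * p = 0 := by
    have := eta_equation_eval h (0 : Polynomial k) X
    simp only [zero_add, aeval_X_left_apply, algebraMap_eq] at this
    linear_combination this
  have hlam : C lam1 * p = 0 := by
    have := eta_equation_eval h (X : Polynomial k) 0
    simp only [sub_zero, add_zero, aeval_X_left_apply, zero_mul, neg_zero, algebraMap_eq] at this
    have hX : X * (C lam1 * p) = 0 := by linear_combination this - hkap
    exact (mul_eq_zero.1 hX).resolve_left X_ne_zero
  have hconst : p = C (p.eval 1) := by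
    have := eta_equation_eval h (X - 1 : Polynomial k) 1
    have h1 : aeval (1 : Polynomial k) p = C (p.eval 1) := by
      simpa using aeval_algebraMap_apply_eq_algebraMap_eval (A := Polynomial k) 1 p
    simp only [sub_add_cancel, aeval_X_left_apply, one_mul, algebraMap_eq, h1] at this
    linear_combination (X - 1) * hlam + hkap - this
  refine ⟨p.eval 1, hconst, ?_, ?_⟩
  · rw [hconst, ← C_mul, C_eq_zero] at hlam
    rw [mul_comm, hlam]
  · rw [hconst, ← C_mul, C_eq_zero] at hkap
    rw [mul_comm, hkap]

lemma smul_eq_zero_of_alpha_equation {lam1 kap1 lam2 kap2 : k} {x : HH k}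
    (h : opL k (betaE k lam1 kap1) x =
      opR k x (betaE k lam2 kap2) - sw12 k (opR k (betaE k lam1 kap1) x)) :
    (2 * kap1 - kap2) • x = 0 := by
  have := congrArg (evalHHH k 0 (X ⊗ₜ[k] 1 : HH k) (1 ⊗ₜ[k] X)) h
  simp only [map_sub, evalHHH_opL, evalHHH_opR, evalHHH_sw12, evalHH_betaE, zero_add,
    evalHH_X_tmul_one_one_tmul_X] at this
  refine (Algebra.smul_def (A := HH k) _ _).trans ?_
  rw [map_sub, map_mul, map_ofNat]
  linear_combination this

lemma cocycle_of_alpha_eta_equation {a : k} (ha : a ≠ 0) {x : HH k}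
    (h : -opL k x (sw2 k (a • ((1 : Polynomial k) ⊗ₜ[k] (1 : Polynomial k)))) =
      opR k x (a • ((1 : Polynomial k) ⊗ₜ[k] (1 : Polynomial k))) -
        sw12 k (opR k x (a • ((1 : Polynomial k) ⊗ₜ[k] (1 : Polynomial k)))))
    (u v w : A) : evalHH k u w x = evalHH k u v x + evalHH k v w x := by
  have := congrArg (evalHHH k u v w) h
  simp only [map_neg, map_sub, evalHHH_opL, evalHHH_opR, evalHHH_sw12, map_smul, evalHH_sw2,
    evalHH_tmul, map_one, mul_one, mul_smul_comm] at this
  have key : a • (evalHH k u w x - (evalHH k u v x + evalHH k v w x)) = 0 := by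
    rw [smul_sub, smul_add]
    linear_combination this
  exact sub_eq_zero.1 ((smul_eq_zero.1 key).resolve_left ha)

lemma exists_tmul_sub_tmul_of_cocycle {x : HH k}
    (h : ∀ u v w : HH k, evalHH k u w x = evalHH k u v x + evalHH k v w x) :
    ∃ q : Polynomial k, x = 1 ⊗ₜ q - q ⊗ₜ 1 := by
  refine ⟨evalHH k 0 X x, ?_⟩
  have h00 : evalHH k (0 : HH k) 0 x = 0 := by simpa using h 0 0 0
  have hneg : evalHH k (X ⊗ₜ[k] 1 : HH k) 0 x = -evalHH k 0 (X ⊗ₜ[k] 1 : HH k) x := by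
    linear_combination h00 - h 0 (X ⊗ₜ[k] 1) 0
  have hsplit := h (X ⊗ₜ[k] 1) 0 (1 ⊗ₜ[k] X)
  rw [evalHH_X_tmul_one_one_tmul_X] at hsplit
  have hleft := evalHH_algHom_apply (Algebra.TensorProduct.includeLeft : Polynomial k →ₐ[k] HH k) 0 X x
  have hright := evalHH_algHom_apply (Algebra.TensorProduct.includeRight : Polynomial k →ₐ[k] HH k) 0 X x
  simp only [map_zero, Algebra.TensorProduct.includeLeft_apply,
    Algebra.TensorProduct.includeRight_apply] at hleft hright
  rw [← hleft, ← hright]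
  linear_combination hsplit + hneg

lemma one_tmul_sub_tmul_one_eq_sum_sp [CharZero k] (q : Polynomial k) :
    (1 : Polynomial k) ⊗ₜ[k] q - q ⊗ₜ[k] 1 = ∑ j ∈ Finset.Icc 1 q.natDegree,
      ((j.factorial : k) * q.coeff j) • ((1 : Polynomial k) ⊗ₜ[k] sp k j - sp k j ⊗ₜ[k] 1) := by
  let D : Polynomial k →ₗ[k] HH k :=
    Algebra.TensorProduct.includeRight.toLinearMap - Algebra.TensorProduct.includeLeft.toLinearMap
  have hD (p : Polynomial k) : D p = 1 ⊗ₜ p - p ⊗ₜ 1 := rfl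
  have hD_C (c : k) : D (C c) = 0 := by
    rw [hD, C_eq_algebraMap, Algebra.algebraMap_eq_smul_one, ← TensorProduct.smul_tmul, sub_self]
  have hsp (j : ℕ) : ((j.factorial : k) * q.coeff j) • sp k j = q.coeff j • X ^ j := by
    rw [sp, smul_smul, mul_right_comm, mul_inv_cancel₀ (Nat.cast_ne_zero.2 j.factorial_ne_zero),
      one_mul]
  have hrange : Finset.range (q.natDegree + 1) = insert 0 (Finset.Icc 1 q.natDegree) := by
    ext m; simp; omega
  simp_rw [← hD, ← map_smul, hsp, ← map_sum]
  conv_lhs => rw [q.as_sum_range_C_mul_X_pow, hrange, Finset.sum_insert (by simp), pow_zero,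
    mul_one, map_add, hD_C, zero_add]
  simp_rw [smul_eq_C_mul]

/-- **Lemma 4.1 (structure of `η` and `α'`).** -/
theorem eta_alpha'_structure
    (k : Type) [Field k] [CharZero k]
    (lam1 kap1 lam2 kap2 : k) (η α' : HH k)
    (hform : ∃ p : Polynomial k, η = p ⊗ₜ[k] (1 : Polynomial k))
    (heta : opL k (betaE k lam1 kap1) η =
      opR k η (betaE k lam2 kap2) - sw12 k (opR k (betaE k lam2 kap2) η))
    (halpha : opL k (betaE k lam1 kap1) α' =
      opR k α' (betaE k lam2 kap2) - sw12 k (opR k (betaE k lam1 kap1) α')) :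
    ∃ a : k,
      -- (a)
      (η = a • ((1 : Polynomial k) ⊗ₜ[k] (1 : Polynomial k)) ∧
        a * lam1 = 0 ∧ a * kap1 = 0) ∧
      -- (b)
      (2 * kap1 - kap2) • α' = 0 ∧
      -- (c)
      (a ≠ 0 → α' ≠ 0 →
        (- opL k α' (sw2 k η) = opR k α' η - sw12 k (opR k α' η)) →
        ∃ (N : ℕ) (w : ℕ → k),
          α' = ∑ j ∈ Finset.Icc 1 N, w j •
            ((1 : Polynomial k) ⊗ₜ[k] sp k j - sp k j ⊗ₜ[k] (1 : Polynomial k))) := by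
  obtain ⟨p, rfl⟩ := hform
  obtain ⟨a, rfl, hlam, hkap⟩ := exists_eq_C_of_eta_equation heta
  have hη : C a ⊗ₜ[k] (1 : Polynomial k) = a • ((1 : Polynomial k) ⊗ₜ[k] (1 : Polynomial k)) := by
    rw [C_eq_algebraMap, Algebra.algebraMap_eq_smul_one, TensorProduct.smul_tmul']
  refine ⟨a, ⟨hη, hlam, hkap⟩, smul_eq_zero_of_alpha_equation halpha, fun ha _ hcc => ?_⟩
  rw [hη] at hcc
  obtain ⟨q, rfl⟩ := exists_tmul_sub_tmul_of_cocycle (cocycle_of_alpha_eta_equation ha hcc)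
  exact ⟨q.natDegree, _, one_tmul_sub_tmul_one_eq_sum_sp q⟩
end

section
/- Let λ1, κ1, λ2, κ2, λ3, κ3 ∈ k and β_i := λ_i s⊗1 − 1⊗s + κ_i⊗1 for i = 1,2,3. Suppose γ = Σ_{i=0}^{m} Σ_{j=0}^{p_i} x_{ij} s^(i)⊗s^(j) ∈ H⊗H is nonzero and satisfies (β1Δ⊗1)γ = (1⊗γΔ)β2 − (12)(1⊗β3Δ)γ, where m is the largest first-factor degree occurring in γ and p_i is the largest j with x_{ij} ≠ 0. If p_m = 1, then λ3 = 0 and m ≤ 2. -/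
open scoped TensorProduct
open Polynomial

/-!
Evaluating `H ⊗ H ⊗ H` at `s ↦ (u, v, w)` turns the identity into one in `k[u, v, w]`: writing
`G(P, Q) = ∑ x i j • P^(i) Q^(j)` for the image of `γ`,
`(λ₁u - v + κ₁) G(u + v, w) = G(v, w) (λ₂u - v - w + κ₂) - (λ₃u - w + κ₃) G(v, u + w)`.
Because `Δ(s^(n)) = ∑ s^(i) ⊗ s^(n-i)`, the coefficients of `G(u + v, w)` and `G(v, u + w)` in the
divided-power monomials `u^(a) v^(b) w^(c)` are `x (a + b) c` and `x b (a + c)`, while `G(v, w)`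
does not involve `u`. Comparing coefficients at `u^(n+2) v^(b) w^(c)` therefore gives a linear
recurrence for the `x i j`. With `p m = 1`, the one at `(0, m, 0)` forces `λ₃ = 0`. The recurrence
then makes every `x b (n + 2)` with `b + n + 1 = m` a multiple of `x m 1 ≠ 0`, and the two quadratic
relations for `λ₁` coming from the next antidiagonal (available once `m ≥ 3`) have no common root
in characteristic zero.
-/

noncomputable section

open Finset
open scoped Nat

variable {k : Type} [Field k]

section DividedPowers

variable {A : Type*} [CommSemiring A] [Algebra k A]

variable (k) in
def dpow (n : ℕ) (P : A) : A := (n ! : k)⁻¹ • P ^ n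

lemma aeval_sp (n : ℕ) (P : A) : aeval P (sp k n) = dpow k n P := by
  simp [sp, dpow]

lemma dpow_add [CharZero k] (n : ℕ) (P Q : A) :
    dpow k n (P + Q) = ∑ ij ∈ antidiagonal n, dpow k ij.1 P * dpow k ij.2 Q := by
  rw [dpow, (Commute.all P Q).add_pow', smul_sum]
  refine sum_congr rfl fun ⟨i, j⟩ hij => ?_
  rw [Finset.HasAntidiagonal.mem_antidiagonal] at hij
  subst hij
  have h : ((i + j)! : k) = (i + j).choose i * i ! * j ! := by
    rw [Nat.choose_symm_add]
    exact_mod_cast (Nat.add_choose_mul_factorial_mul_factorial i j).symm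
  have hc : ((i + j).choose i : k) ≠ 0 := Nat.cast_ne_zero.2 (Nat.choose_pos (by omega)).ne'
  rw [← Nat.cast_smul_eq_nsmul k, smul_smul, dpow, dpow, smul_mul_smul_comm, h]
  field_simp

end DividedPowers

section Evaluation

variable {A : Type*} [CommSemiring A] [Algebra k A]

variable (k) in
def evalTwo (P Q : A) : HH k →ₐ[k] A :=
  Algebra.TensorProduct.lift (aeval P) (aeval Q) fun _ _ => Commute.all _ _

variable (k) in
def evalThree (P Q R : A) : HHH k →ₐ[k] A :=
  Algebra.TensorProduct.lift (aeval P) (evalTwo k Q R) fun _ _ => Commute.all _ _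

@[simp] lemma evalTwo_tmul (P Q : A) (a b : Polynomial k) :
    evalTwo k P Q (a ⊗ₜ b) = aeval P a * aeval Q b :=
  Algebra.TensorProduct.lift_tmul _ _ _ _ _

@[simp] lemma evalThree_tmul (P Q R : A) (a : Polynomial k) (b : HH k) :
    evalThree k P Q R (a ⊗ₜ b) = aeval P a * evalTwo k Q R b :=
  Algebra.TensorProduct.lift_tmul _ _ _ _ _

lemma hcomul_X : Hcomul k X = X ⊗ₜ 1 + 1 ⊗ₜ X := aeval_X _

lemma evalThree_comp_inc12 (P Q R : A) :
    (evalThree k P Q R).comp (inc12 k) = evalTwo k P Q := by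
  ext <;> simp [inc12, tAssoc]

lemma evalThree_comp_inc23 (P Q R : A) :
    (evalThree k P Q R).comp (inc23 k) = evalTwo k Q R := by
  ext <;> simp [inc23]

lemma evalThree_comp_DL (P Q R : A) :
    (evalThree k P Q R).comp (DL k) = evalTwo k (P + Q) R := by
  ext <;> simp [DL, tAssoc, hcomul_X, Algebra.TensorProduct.one_def, TensorProduct.add_tmul]

lemma evalThree_comp_DR (P Q R : A) :
    (evalThree k P Q R).comp (DR k) = evalTwo k P (Q + R) := by
  ext <;> simp [DR, hcomul_X, Algebra.TensorProduct.one_def, TensorProduct.tmul_add]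

lemma evalThree_comp_sw12 (P Q R : A) :
    (evalThree k P Q R).comp (sw12 k).toAlgHom = evalThree k Q P R := by
  ext <;> simp [sw12, sw2, tAssoc, Algebra.TensorProduct.one_def]

lemma evalThree_opL (P Q R : A) (β γ : HH k) :
    evalThree k P Q R (opL k β γ) = evalTwo k P Q β * evalTwo k (P + Q) R γ := by
  rw [opL, map_mul, ← evalThree_comp_inc12 P Q R, ← evalThree_comp_DL P Q R]
  rfl

lemma evalThree_opR (P Q R : A) (β γ : HH k) :
    evalThree k P Q R (opR k β γ) = evalTwo k Q R β * evalTwo k P (Q + R) γ := by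
  rw [opR, map_mul, ← evalThree_comp_inc23 P Q R, ← evalThree_comp_DR P Q R]
  rfl

lemma evalThree_sw12 (P Q R : A) (z : HHH k) :
    evalThree k P Q R (sw12 k z) = evalThree k Q P R z := by
  rw [← evalThree_comp_sw12 P Q R]
  rfl

end Evaluation

section Intertwining

variable {A : Type*} [CommRing A] [Algebra k A]

lemma evalTwo_betaE (P Q : A) (lam kap : k) :
    evalTwo k P Q (betaE k lam kap) = lam • P - Q + algebraMap k A kap := by
  simp [betaE, Algebra.algebraMap_eq_smul_one]

lemma evalTwo_of_intertwining {lam1 kap1 lam2 kap2 lam3 kap3 : k} {γ : HH k}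
    (heq : opL k (betaE k lam1 kap1) γ =
      opR k γ (betaE k lam2 kap2) - sw12 k (opR k (betaE k lam3 kap3) γ)) (P Q R : A) :
    (lam1 • P - Q + algebraMap k A kap1) * evalTwo k (P + Q) R γ =
      evalTwo k Q R γ * (lam2 • P - (Q + R) + algebraMap k A kap2) -
        (lam3 • P - R + algebraMap k A kap3) * evalTwo k Q (P + R) γ := by
  have h := congrArg (evalThree k P Q R) heq
  rwa [map_sub, evalThree_sw12, evalThree_opL, evalThree_opR, evalThree_opR, evalTwo_betaE,
    evalTwo_betaE, evalTwo_betaE] at h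

lemma smul_sub_add_algebraMap_mul (lam kap : k) (P Q F : A) :
    (lam • P - Q + algebraMap k A kap) * F = lam • (P * F) - Q * F + kap • F := by
  rw [Algebra.smul_def, Algebra.smul_def, Algebra.smul_def]
  ring

end Intertwining

section DividedCoefficients

open MvPolynomial

variable {σ : Type*} [Fintype σ]

variable (k) in
/-- The coefficient of the divided-power monomial `∏ i, X i ^ d i / (d i)!`. -/
def dcoeff (d : σ →₀ ℕ) : MvPolynomial σ k →ₗ[k] k := (∏ i, ((d i)! : k)) • lcoeff k d

lemma dcoeff_apply (d : σ →₀ ℕ) (F : MvPolynomial σ k) :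
    dcoeff k d F = (∏ i, ((d i)! : k)) * coeff d F := rfl

lemma prod_factorial_eq_mul_prod_factorial_tsub_single [DecidableEq σ] (d : σ →₀ ℕ) (i : σ)
    (hi : d i ≠ 0) :
    ∏ j, ((d j)! : k) = d i * ∏ j, (((d - Finsupp.single i 1 : σ →₀ ℕ) j)! : k) := by
  rw [Fintype.prod_eq_mul_prod_compl i, Fintype.prod_eq_mul_prod_compl i, ← mul_assoc]
  congr 1
  · rw [Finsupp.tsub_apply, Finsupp.single_eq_same, ← Nat.cast_mul, Nat.mul_factorial_pred hi]
  · refine prod_congr rfl fun j hj => ?_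
    rw [Finsupp.tsub_apply, Finsupp.single_eq_of_ne, Nat.sub_zero]
    simpa using hj

lemma dcoeff_X_mul [DecidableEq σ] (d : σ →₀ ℕ) (i : σ) (F : MvPolynomial σ k) :
    dcoeff k d (X i * F) = d i * dcoeff k (d - Finsupp.single i 1) F := by
  rw [dcoeff_apply, dcoeff_apply, coeff_X_mul']
  by_cases hi : d i = 0
  · simp [hi]
  · rw [if_pos (Finsupp.mem_support_iff.2 hi),
      prod_factorial_eq_mul_prod_factorial_tsub_single d i hi, mul_assoc]

lemma dcoeff_prod_dpow_X [DecidableEq σ] [CharZero k] (d e : σ →₀ ℕ) :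
    dcoeff k d (∏ i, dpow k (e i) (X i : MvPolynomial σ k)) = if e = d then 1 else 0 := by
  have hmon : ∏ i, dpow k (e i) (X i : MvPolynomial σ k) =
      (∏ i, ((e i)! : k))⁻¹ • monomial e 1 := by
    simp only [dpow, MvPolynomial.smul_eq_C_mul, prod_mul_distrib, ← map_prod,
      prod_inv_distrib, monomial_eq, MvPolynomial.C_1, one_mul,
      Finsupp.prod_fintype _ _ fun _ => pow_zero _]
  have hne : ∏ i, ((e i)! : k) ≠ 0 :=
    prod_ne_zero_iff.2 fun _ _ => Nat.cast_ne_zero.2 (Nat.factorial_ne_zero _)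
  rw [hmon, map_smul, dcoeff_apply, MvPolynomial.coeff_monomial, smul_eq_mul]
  split_ifs with h
  · subst h
    field_simp
  · simp

end DividedCoefficients

section ThreeVariables

open MvPolynomial

def deg3 (a b c : ℕ) : Fin 3 →₀ ℕ :=
  Finsupp.single 0 a + Finsupp.single 1 b + Finsupp.single 2 c

lemma deg3_inj {a b c a' b' c' : ℕ} :
    deg3 a b c = deg3 a' b' c' ↔ a = a' ∧ b = b' ∧ c = c' := by
  refine ⟨fun h => ?_, by rintro ⟨rfl, rfl, rfl⟩; rfl⟩
  have h0 := DFunLike.congr_fun h 0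
  have h1 := DFunLike.congr_fun h 1
  have h2 := DFunLike.congr_fun h 2
  simp only [deg3, Finsupp.add_apply, Finsupp.single_apply] at h0 h1 h2
  simp_all

@[simp] lemma deg3_apply_zero (a b c : ℕ) : deg3 a b c 0 = a := by simp [deg3]

@[simp] lemma deg3_apply_one (a b c : ℕ) : deg3 a b c 1 = b := by simp [deg3]

@[simp] lemma deg3_apply_two (a b c : ℕ) : deg3 a b c 2 = c := by simp [deg3]

@[simp] lemma deg3_tsub_single_zero (a b c : ℕ) :
    deg3 a b c - Finsupp.single 0 1 = deg3 (a - 1) b c := by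
  ext i; fin_cases i <;> simp [deg3]

@[simp] lemma deg3_tsub_single_one (a b c : ℕ) :
    deg3 a b c - Finsupp.single 1 1 = deg3 a (b - 1) c := by
  ext i; fin_cases i <;> simp [deg3]

@[simp] lemma deg3_tsub_single_two (a b c : ℕ) :
    deg3 a b c - Finsupp.single 2 1 = deg3 a b (c - 1) := by
  ext i; fin_cases i <;> simp [deg3]

variable [CharZero k]

lemma dcoeff_dpow_X_mul_dpow_X_mul_dpow_X (a b c a' b' c' : ℕ) :
    dcoeff k (deg3 a b c) (dpow k a' (X 0) * dpow k b' (X 1) * dpow k c' (X 2)) =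
      if a' = a ∧ b' = b ∧ c' = c then 1 else 0 := by
  have h : dpow k a' (X 0) * dpow k b' (X 1) * dpow k c' (X 2) =
      ∏ i, dpow k (deg3 a' b' c' i) (X i : MvPolynomial (Fin 3) k) := by
    simp [Fin.prod_univ_three, mul_assoc]
  rw [h, dcoeff_prod_dpow_X, if_congr deg3_inj rfl rfl]

lemma dcoeff_dpow_add_mul_dpow (a b c i j : ℕ) :
    dcoeff k (deg3 a b c) (dpow k i (X 0 + X 1) * dpow k j (X 2)) =
      if i = a + b ∧ j = c then 1 else 0 := by
  simp only [dpow_add, sum_mul, map_sum, dcoeff_dpow_X_mul_dpow_X_mul_dpow_X]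
  by_cases hj : j = c
  · simp_rw [hj, and_true, ← Prod.mk.injEq, Prod.mk.eta, sum_ite_eq',
      Finset.HasAntidiagonal.mem_antidiagonal, eq_comm]
  · simp [hj]

lemma dcoeff_dpow_mul_dpow_add (a b c i j : ℕ) :
    dcoeff k (deg3 a b c) (dpow k i (X 1) * dpow k j (X 0 + X 2)) =
      if i = b ∧ j = a + c then 1 else 0 := by
  have hcomm : ∀ a' c', dpow k i (X 1) * (dpow k a' (X 0) * dpow k c' (X 2)) =
      dpow k a' (X 0) * dpow k i (X 1) * dpow k c' (X 2 : MvPolynomial (Fin 3) k) :=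
    fun _ _ => by ring
  simp only [dpow_add, mul_sum, hcomm, map_sum, dcoeff_dpow_X_mul_dpow_X_mul_dpow_X]
  by_cases hi : i = b
  · simp_rw [hi, true_and, ← Prod.mk.injEq, Prod.mk.eta, sum_ite_eq',
      Finset.HasAntidiagonal.mem_antidiagonal, eq_comm]
  · simp [hi]

lemma dcoeff_dpow_mul_dpow (a b c i j : ℕ) :
    dcoeff k (deg3 (a + 1) b c) (dpow k i (X 1) * dpow k j (X 2 : MvPolynomial (Fin 3) k)) = 0 := by
  have h := dcoeff_dpow_X_mul_dpow_X_mul_dpow_X (k := k) (a + 1) b c 0 i j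
  rwa [dpow, pow_zero, Nat.factorial_zero, Nat.cast_one, inv_one, one_smul, one_mul,
    if_neg (by omega)] at h

end ThreeVariables

section Coefficients

open MvPolynomial

variable (k) in
def dpSum (m : ℕ) (p : ℕ → ℕ) (x : ℕ → ℕ → k) : HH k :=
  ∑ i ∈ range (m + 1), ∑ j ∈ range (p i + 1), x i j • (sp k i ⊗ₜ[k] sp k j)

variable {m : ℕ} {p : ℕ → ℕ} {x : ℕ → ℕ → k}

lemma evalTwo_dpSum {A : Type*} [CommSemiring A] [Algebra k A] (P Q : A) :
    evalTwo k P Q (dpSum k m p x) =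
      ∑ i ∈ range (m + 1), ∑ j ∈ range (p i + 1), x i j • (dpow k i P * dpow k j Q) := by
  simp [dpSum, aeval_sp]

lemma sum_sum_smul_ite_and_eq (hsupp : ∀ i j, x i j ≠ 0 → i ≤ m ∧ j ≤ p i) (I J : ℕ) :
    ∑ i ∈ range (m + 1), ∑ j ∈ range (p i + 1), x i j • (if i = I ∧ j = J then (1 : k) else 0) =
      x I J := by
  by_cases h : x I J = 0
  · rw [h]
    refine sum_eq_zero fun i _ => sum_eq_zero fun j _ => ?_
    split_ifs with hij
    · rw [hij.1, hij.2, h, zero_smul]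
    · exact smul_zero _
  · obtain ⟨hI, hJ⟩ := hsupp I J h
    rw [sum_eq_single_of_mem I (by simpa [Nat.lt_succ_iff] using hI)
      fun i _ hi => sum_eq_zero fun j _ => by simp [hi]]
    rw [sum_eq_single_of_mem J (by simpa [Nat.lt_succ_iff] using hJ) fun j _ hj => by simp [hj]]
    simp

variable [CharZero k]

lemma dcoeff_evalTwo_dpSum_add_left (hsupp : ∀ i j, x i j ≠ 0 → i ≤ m ∧ j ≤ p i) (a b c : ℕ) :
    dcoeff k (deg3 a b c) (evalTwo k (X 0 + X 1) (X 2) (dpSum k m p x)) = x (a + b) c := by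
  simp only [evalTwo_dpSum, map_sum, map_smul, dcoeff_dpow_add_mul_dpow]
  exact sum_sum_smul_ite_and_eq hsupp _ _

lemma dcoeff_evalTwo_dpSum_add_right (hsupp : ∀ i j, x i j ≠ 0 → i ≤ m ∧ j ≤ p i) (a b c : ℕ) :
    dcoeff k (deg3 a b c) (evalTwo k (X 1) (X 0 + X 2) (dpSum k m p x)) = x b (a + c) := by
  simp only [evalTwo_dpSum, map_sum, map_smul, dcoeff_dpow_mul_dpow_add]
  exact sum_sum_smul_ite_and_eq hsupp _ _

lemma dcoeff_evalTwo_dpSum (a b c : ℕ) :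
    dcoeff k (deg3 (a + 1) b c) (evalTwo k (X 1) (X 2) (dpSum k m p x)) = 0 := by
  simp [evalTwo_dpSum, dcoeff_dpow_mul_dpow]

end Coefficients

def CoeffRecurrence (lam1 kap1 lam3 kap3 : k) (x : ℕ → ℕ → k) : Prop :=
  ∀ n b c : ℕ, (lam1 * (n + 2) - b) * x (n + 1 + b) c + kap1 * x (n + 2 + b) c +
    ((lam3 * (n + 2) - c) * x b (n + 1 + c) + kap3 * x b (n + 2 + c)) = 0

lemma natCast_mul_apply_add_pred (f : ℕ → k) (n b : ℕ) :
    (b : k) * f (n + 2 + (b - 1)) = b * f (n + 1 + b) := by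
  rcases Nat.eq_zero_or_pos b with rfl | hb
  · simp
  · congr 2
    omega

open MvPolynomial in
lemma coeffRecurrence_of_intertwining [CharZero k] {lam1 kap1 lam2 kap2 lam3 kap3 : k} {m : ℕ}
    {p : ℕ → ℕ} {x : ℕ → ℕ → k} (hsupp : ∀ i j, x i j ≠ 0 → i ≤ m ∧ j ≤ p i)
    (heq : opL k (betaE k lam1 kap1) (dpSum k m p x) =
      opR k (dpSum k m p x) (betaE k lam2 kap2) -
        sw12 k (opR k (betaE k lam3 kap3) (dpSum k m p x))) :
    CoeffRecurrence lam1 kap1 lam3 kap3 x := by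
  intro n b c
  have h := congrArg (dcoeff k (deg3 (n + 2) b c))
    (evalTwo_of_intertwining heq (X 0 : MvPolynomial (Fin 3) k) (X 1) (X 2))
  have hn : n + 2 - 1 = n + 1 := rfl
  rw [mul_comm (evalTwo k (X 1) (X 2) _), smul_sub_add_algebraMap_mul,
    smul_sub_add_algebraMap_mul, smul_sub_add_algebraMap_mul] at h
  simp only [add_mul, map_add, map_sub, map_smul, smul_eq_mul, dcoeff_X_mul, deg3_apply_zero,
    deg3_apply_one, deg3_apply_two, deg3_tsub_single_zero, deg3_tsub_single_one,
    deg3_tsub_single_two, dcoeff_evalTwo_dpSum_add_left hsupp,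
    dcoeff_evalTwo_dpSum_add_right hsupp, hn, dcoeff_evalTwo_dpSum] at h
  have hb := natCast_mul_apply_add_pred (fun i => x i c) n b
  have hc := natCast_mul_apply_add_pred (x b) n c
  push_cast at h
  linear_combination h + hb + hc

namespace CoeffRecurrence

variable {lam1 kap1 lam3 kap3 : k} {x : ℕ → ℕ → k} {m : ℕ}

lemma lam3_eq_zero [CharZero k] (hrec : CoeffRecurrence lam1 kap1 lam3 kap3 x)
    (hrow : ∀ i j, m < i → x i j = 0) (hm2 : x m 2 = 0) (hm1 : x m 1 ≠ 0) : lam3 = 0 := by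
  have h := hrec 0 m 0
  simp (disch := omega) only [hrow, hm2, zero_add, Nat.cast_zero, sub_zero, mul_zero,
    add_zero] at h
  have h2 : (2 : k) * x m 1 ≠ 0 := mul_ne_zero two_ne_zero hm1
  exact (mul_eq_zero.1 (by linear_combination h : lam3 * (2 * x m 1) = 0)).resolve_right h2

lemma eq_zero_of_le_add (hrec : CoeffRecurrence lam1 kap1 0 kap3 x)
    (hrow : ∀ i j, m < i → x i j = 0) {b n : ℕ} (h : m ≤ b + n) : x b (n + 2) = 0 := by
  have hc1 := hrec n b 1
  have hc0 := hrec (n + 1) b 0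
  simp (disch := omega) only [hrow, mul_zero, zero_add, add_assoc] at hc1 hc0
  push_cast at hc1 hc0
  linear_combination hc0 - hc1

lemma eq_mul_of_add_eq (hrec : CoeffRecurrence lam1 kap1 0 kap3 x)
    (hrow : ∀ i j, m < i → x i j = 0) {b n : ℕ} (h : n + 1 + b = m) :
    x b (n + 2) = (lam1 * (n + 2) - b) * x m 1 := by
  have h1 := hrec n b 1
  rw [h, hrow (n + 2 + b) 1 (by omega), hrec.eq_zero_of_le_add hrow (n := n + 1) (by omega)] at h1
  push_cast at h1
  linear_combination -h1

lemma mul_eq_of_add_eq (hrec : CoeffRecurrence lam1 kap1 0 kap3 x)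
    (hrow : ∀ i j, m < i → x i j = 0) (hm2 : x m 2 = 0) {b n : ℕ} (h : n + 2 + b = m) :
    (lam1 * (n + 2) - b) * x (n + 1 + b) 2 = 2 * x b (n + 3) := by
  have h2 := hrec n b 2
  rw [h, hm2, hrec.eq_zero_of_le_add hrow (n := n + 2) (by omega)] at h2
  push_cast at h2
  linear_combination h2

lemma quadratic (hrec : CoeffRecurrence lam1 kap1 0 kap3 x)
    (hrow : ∀ i j, m < i → x i j = 0) (hm2 : x m 2 = 0) (hm1 : x m 1 ≠ 0) {b n : ℕ}
    (h : n + 2 + b = m) :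
    (lam1 * (n + 2) - b) * (2 * lam1 - (n + 1 + b : ℕ)) = 2 * (lam1 * (n + 3) - b) := by
  have hcorner := hrec.eq_mul_of_add_eq hrow (b := n + 1 + b) (n := 0) (by omega)
  have hedge := hrec.eq_mul_of_add_eq hrow (b := b) (n := n + 1) (by omega)
  have hrel := hrec.mul_eq_of_add_eq hrow hm2 h
  rw [hcorner, hedge] at hrel
  push_cast at hrel ⊢
  refine mul_right_cancel₀ hm1 ?_
  linear_combination hrel

lemma le_two [CharZero k] (hrec : CoeffRecurrence lam1 kap1 0 kap3 x)
    (hrow : ∀ i j, m < i → x i j = 0) (hm2 : x m 2 = 0) (hm1 : x m 1 ≠ 0) : m ≤ 2 := by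
  by_contra! hm
  obtain ⟨M, rfl⟩ : ∃ M, m = M + 3 := ⟨m - 3, by omega⟩
  have e0 := hrec.quadratic hrow hm2 hm1 (n := 0) (b := M + 1) (by omega)
  have e1 := hrec.quadratic hrow hm2 hm1 (n := 1) (b := M) (by omega)
  push_cast at e0 e1
  have hM4 : (M : k) + 4 ≠ 0 := by exact_mod_cast (M + 3).succ_ne_zero
  have hM5 : (M : k) + 5 ≠ 0 := by exact_mod_cast (M + 4).succ_ne_zero
  have hfac : (lam1 + 1) * (2 * lam1 - M - 4) = 0 := by linear_combination e1 - e0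
  rcases mul_eq_zero.1 hfac with h | h
  · obtain rfl : lam1 = -1 := by linear_combination h
    exact mul_ne_zero hM4 hM5 (by linear_combination e0)
  · have hM : (M : k) = 2 * lam1 - 4 := by linear_combination -h
    rw [hM] at e0
    exact hM4 (by linear_combination hM - e0)

end CoeffRecurrence

end

theorem intertwining_pm_one_general
    (k : Type) [Field k] [CharZero k]
    (lam1 kap1 lam2 kap2 lam3 kap3 : k)
    (m : ℕ) (p : ℕ → ℕ) (x : ℕ → ℕ → k) (γ : HH k)
    (hγ : γ = ∑ i ∈ Finset.range (m + 1), ∑ j ∈ Finset.range (p i + 1),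
      x i j • (sp k i ⊗ₜ[k] sp k j))
    (hsupp : ∀ i j, x i j ≠ 0 → i ≤ m ∧ j ≤ p i)
    (hp : ∀ i, x i (p i) ≠ 0 ∨ (p i = 0 ∧ ∀ j, x i j = 0))
    (heq : opL k (betaE k lam1 kap1) γ =
      opR k γ (betaE k lam2 kap2) - sw12 k (opR k (betaE k lam3 kap3) γ))
    (hpm : p m = 1) :
    lam3 = 0 ∧ m ≤ 2 := by
  subst hγ
  have hrec := coeffRecurrence_of_intertwining hsupp heq
  have hrow : ∀ i j, m < i → x i j = 0 := fun i j hi =>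
    by_contra fun h => absurd (hsupp i j h).1 (by omega)
  have hm2 : x m 2 = 0 := by_contra fun h => absurd (hsupp m 2 h).2 (by omega)
  have hm1 : x m 1 ≠ 0 := by simpa [hpm] using hp m
  obtain rfl := hrec.lam3_eq_zero hrow hm2 hm1
  exact ⟨rfl, hrec.le_two hrow hm2 hm1⟩

/-- **Lemma 4.5:** if `p_m = 1` then `λ₃ = 0` and `m ≤ 2`. -/
theorem intertwining_pm_one
    (k : Type) [Field k] [CharZero k]
    (lam1 kap1 lam2 kap2 lam3 kap3 : k)
    (m : ℕ) (p : ℕ → ℕ) (x : ℕ → ℕ → k) (γ : HH k)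
    (hγ : γ = ∑ i ∈ Finset.range (m + 1), ∑ j ∈ Finset.range (p i + 1),
      x i j • (sp k i ⊗ₜ[k] sp k j))
    (hne : γ ≠ 0)
    (hsupp : ∀ i j, x i j ≠ 0 → i ≤ m ∧ j ≤ p i)
    (hm : ∃ j, x m j ≠ 0)
    (hp : ∀ i, x i (p i) ≠ 0 ∨ (p i = 0 ∧ ∀ j, x i j = 0))
    (heq : opL k (betaE k lam1 kap1) γ =
      opR k γ (betaE k lam2 kap2) - sw12 k (opR k (betaE k lam3 kap3) γ))
    (hpm : p m = 1) :
    lam3 = 0 ∧ m ≤ 2 :=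
  intertwining_pm_one_general k lam1 kap1 lam2 kap2 lam3 kap3 m p x γ hγ hsupp hp heq hpm
end
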